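/- Let r ≥ 1, let s be a nonzero integer with gcd(s, r) = 1, define Φ : L^r → L^r by Φ(x_1, …, x_r) = (t^s·σ(x_r), σ(x_1), …, σ(x_{r−1})), and set f = Φ − id and Λ_0 = 𝒪_L^r. Let Λ ⊆ L^r be an 𝒪_L-lattice (an 𝒪_L-submodule of the form P·Λ_0 for some P ∈ GL_r(L)), and let e ∈ ℤ be such that f(t^eΛ_0) ⊆ Λ. Then t^eΛ_0 ⊆ f^{−1}(Λ), f(t^eΛ_0) = t^e·f(Λ_0) is an additive subgroup of Λ, f^{−1}(Λ) is an additive subgroup of L^r, and f induces a bijection (indeed an isomorphism of abelian groups) from the quotient f^{−1}(Λ) / t^eΛ_0 onto Λ / f(t^eΛ_0). -/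

import Mathlib

open Pointwise

/-!
`f = Φ - id` is additive and commutes with multiplication by `t ^ e` (as `σ` fixes `t`), so
everything reduces to `f` being bijective on `L ^ r`. Solving `Φ x - x = y` coordinate by
coordinate, `x₁, …, x_{r-1}` are determined by `x₀` through `xₖ₊₁ = σ xₖ - yₖ₊₁`, and the
remaining coordinate equation becomes the scalar equation `t ^ s τ u - u = a` for `τ = σ ^ r`.
Since `τ` preserves `v`, the homogeneous equation gives `v u = s + v u`, so `u = 0` as `s ≠ 0`;
and the equation is solvable because, up to `τ⁻¹` when `s < 0`, it is a fixed-point equation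
for a map contracting the valuation by `|s| ≥ 1`, which has a fixed point since `L` is complete.
-/

section TwistedShift

variable {R : Type*} [Ring R] (σ : R ≃+* R) (c : R) (r : ℕ)

def twistedShift : (Fin r → R) →+ (Fin r → R) where
  toFun x i := if (i : ℕ) = 0 then c * σ (x ⟨r - 1, Nat.sub_lt i.pos one_pos⟩)
    else σ (x ⟨(i : ℕ) - 1, (Nat.sub_le _ _).trans_lt i.2⟩)
  map_zero' := by ext i; simp
  map_add' x y := by ext i; simp only [Pi.add_apply]; split_ifs <;> simp [mul_add]

/-- The coordinates `k ≥ 1` of a solution of `twistedShift σ c r x - x = y` starting at `u`. -/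
def shiftRecursion (y : ℕ → R) (u : R) : ℕ → R
  | 0 => u
  | k + 1 => σ (shiftRecursion y u k) - y (k + 1)

variable {σ c r}

theorem twistedShift_apply_zero (x : Fin r → R) (h : 0 < r) :
    twistedShift σ c r x ⟨0, h⟩ = c * σ (x ⟨r - 1, by omega⟩) := by
  simp [twistedShift]

theorem twistedShift_apply_succ (x : Fin r → R) {k : ℕ} (hk : k + 1 < r) :
    twistedShift σ c r x ⟨k + 1, hk⟩ = σ (x ⟨k, by omega⟩) := by
  simp [twistedShift]

theorem twistedShift_smul {a : R} (ha : σ a = a) (hac : Commute a c) (x : Fin r → R) :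
    twistedShift σ c r (a • x) = a • twistedShift σ c r x := by
  ext i
  simp only [twistedShift, AddMonoidHom.coe_mk, ZeroHom.coe_mk, Pi.smul_apply, smul_eq_mul,
    map_mul, ha]
  split_ifs
  · rw [← mul_assoc, ← hac.eq, mul_assoc]
  · rfl

theorem eq_zero_of_twistedShift_eq_self (hc : ∀ u, c * (σ ^ r) u = u → u = 0) {x : Fin r → R}
    (hx : twistedShift σ c r x = x) : x = 0 := by
  ext ⟨i, hi⟩
  have hiter : ∀ k (hk : k < r), x ⟨k, hk⟩ = (σ ^ k) (x ⟨0, by omega⟩) := by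
    intro k
    induction k with
    | zero => intro; rfl
    | succ k ih =>
      intro hk
      rw [← congrFun hx, twistedShift_apply_succ, ih, pow_succ', RingAut.mul_apply]
  have h0 : x ⟨0, by omega⟩ = 0 := hc _ <| calc
    c * (σ ^ r) (x ⟨0, by omega⟩) = c * σ ((σ ^ (r - 1)) (x ⟨0, by omega⟩)) := by
      rw [← RingAut.mul_apply, ← pow_succ', Nat.sub_add_cancel (by omega)]
    _ = twistedShift σ c r x ⟨0, by omega⟩ := by rw [twistedShift_apply_zero, hiter (r - 1)]
    _ = x ⟨0, by omega⟩ := congrFun hx _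
  rw [hiter, h0, map_zero, Pi.zero_apply]

theorem shiftRecursion_eq_pow_apply_add (y : ℕ → R) (u : R) (k : ℕ) :
    shiftRecursion σ y u k = (σ ^ k) u + shiftRecursion σ y 0 k := by
  induction k with
  | zero => simp [shiftRecursion]
  | succ k ih =>
    rw [shiftRecursion, shiftRecursion, ih, map_add, pow_succ', RingAut.mul_apply]
    abel

theorem exists_twistedShift_sub_eq (hc : ∀ a, ∃ u, c * (σ ^ r) u - u = a) (y : Fin r → R) :
    ∃ x, twistedShift σ c r x - x = y := by
  rcases Nat.eq_zero_or_pos r with rfl | hr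
  · exact ⟨0, Subsingleton.elim _ _⟩
  let y' : ℕ → R := fun k => if hk : k < r then y ⟨k, hk⟩ else 0
  -- by `shiftRecursion_eq_pow_apply_add`, this choice of `u` is what coordinate `0` requires
  obtain ⟨u, hu⟩ := hc (y' 0 - c * σ (shiftRecursion σ y' 0 (r - 1)))
  refine ⟨fun i => shiftRecursion σ y' u i, ?_⟩
  ext ⟨i, hi⟩
  rw [Pi.sub_apply]
  cases i with
  | zero =>
    rw [twistedShift_apply_zero, shiftRecursion_eq_pow_apply_add y' u (r - 1), map_add,
      ← RingAut.mul_apply, ← pow_succ', Nat.sub_add_cancel hr, mul_add]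
    simp only [shiftRecursion]
    rw [show y ⟨0, hi⟩ = y' 0 by simp [y', hr], add_sub_right_comm, hu, sub_add_cancel]
  | succ k =>
    rw [twistedShift_apply_succ, shiftRecursion, sub_sub_cancel]
    simp [y', hi]

theorem bijective_twistedShift_sub_id (hinj : ∀ u, c * (σ ^ r) u = u → u = 0)
    (hsurj : ∀ a, ∃ u, c * (σ ^ r) u - u = a) :
    Function.Bijective (twistedShift σ c r - AddMonoidHom.id (Fin r → R)) :=
  ⟨(injective_iff_map_eq_zero _).mpr fun _ hx =>
      eq_zero_of_twistedShift_eq_self hinj (sub_eq_zero.mp hx),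
    exists_twistedShift_sub_eq hsurj⟩

end TwistedShift

namespace AddValuation

variable {K : Type*} [DivisionRing K]

def IsSeqComplete (w : AddValuation K (WithTop ℤ)) : Prop :=
  ∀ x : ℕ → K, (∀ M : ℤ, ∃ N, ∀ a ≥ N, ∀ b ≥ N, (M : WithTop ℤ) ≤ w (x a - x b)) →
    ∃ l, ∀ M : ℤ, ∃ N, ∀ a ≥ N, (M : WithTop ℤ) ≤ w (x a - l)

section OfInt

variable (v : K → ℤ) (hv_mul : ∀ x y : K, x ≠ 0 → y ≠ 0 → v (x * y) = v x + v y)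
  (hv_add : ∀ x y : K, x ≠ 0 → y ≠ 0 → x + y ≠ 0 → min (v x) (v y) ≤ v (x + y))

open Classical in
noncomputable def ofIntOnNonzero : AddValuation K (WithTop ℤ) :=
  AddValuation.of (fun x => if x = 0 then ⊤ else (v x : WithTop ℤ)) (if_pos rfl)
    (by
      have h := hv_mul 1 1 one_ne_zero one_ne_zero
      rw [mul_one] at h
      simp only [one_ne_zero, if_false, WithTop.coe_eq_zero]
      omega)
    (by
      intro x y
      by_cases hx : x = 0
      · simp [hx]
      by_cases hy : y = 0
      · simp [hy]
      by_cases hxy : x + y = 0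
      · simp [hxy]
      simp only [hx, hy, hxy, if_false]
      exact_mod_cast hv_add x y hx hy hxy)
    (by
      intro x y
      by_cases hx : x = 0
      · simp [hx]
      by_cases hy : y = 0
      · simp [hy]
      simp only [hx, hy, mul_ne_zero hx hy, if_false]
      exact_mod_cast hv_mul x y hx hy)

variable {v hv_mul hv_add}

theorem ofIntOnNonzero_apply {x : K} (hx : x ≠ 0) :
    ofIntOnNonzero v hv_mul hv_add x = v x := by
  simp [ofIntOnNonzero, hx]

theorem coe_le_ofIntOnNonzero_iff {M : ℤ} {x : K} :
    (M : WithTop ℤ) ≤ ofIntOnNonzero v hv_mul hv_add x ↔ x = 0 ∨ M ≤ v x := by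
  by_cases hx : x = 0 <;> simp [ofIntOnNonzero, hx]

theorem ofIntOnNonzero_map {σ : K ≃+* K} (hσv : ∀ x, x ≠ 0 → v (σ x) = v x) (x : K) :
    ofIntOnNonzero v hv_mul hv_add (σ x) = ofIntOnNonzero v hv_mul hv_add x := by
  by_cases hx : x = 0
  · simp [hx]
  rw [ofIntOnNonzero_apply hx, ofIntOnNonzero_apply ((map_ne_zero σ).mpr hx), hσv x hx]

theorem isSeqComplete_ofIntOnNonzero
    (hcomp : ∀ x : ℕ → K,
      (∀ M : ℤ, ∃ N : ℕ, ∀ a ≥ N, ∀ b ≥ N, x a - x b = 0 ∨ M ≤ v (x a - x b)) →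
      ∃ l : K, ∀ M : ℤ, ∃ N : ℕ, ∀ a ≥ N, x a - l = 0 ∨ M ≤ v (x a - l)) :
    (ofIntOnNonzero v hv_mul hv_add).IsSeqComplete := fun x hx => by
  simpa only [coe_le_ofIntOnNonzero_iff] using
    hcomp x (by simpa only [coe_le_ofIntOnNonzero_iff] using hx)

end OfInt

theorem eq_of_forall_coe_le_map_sub (w : AddValuation K (WithTop ℤ)) {x y : K}
    (h : ∀ M : ℤ, (M : WithTop ℤ) ≤ w (x - y)) : x = y :=
  sub_eq_zero.mp <| w.top_iff.mp <| WithTop.eq_top_iff_forall_ge.mpr h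

variable {w : AddValuation K (WithTop ℤ)}

section Contraction

variable {g : K → K} (hg : ∀ x y, w (x - y) + 1 ≤ w (g x - g y))
include hg

theorem map_iterate_sub_ge (n : ℕ) (x y : K) :
    w (x - y) + (n : ℤ) ≤ w (g^[n] x - g^[n] y) := by
  induction n with
  | zero => simp
  | succ n ih =>
    rw [Function.iterate_succ_apply', Function.iterate_succ_apply']
    calc w (x - y) + ((n + 1 : ℕ) : ℤ) = w (x - y) + (n : ℤ) + 1 := by
          push_cast; rw [add_assoc]
      _ ≤ w (g^[n] x - g^[n] y) + 1 := by gcongr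
      _ ≤ _ := hg _ _

theorem map_iterate_sub_self_ge (x : K) (n : ℕ) : w (g x - x) ≤ w (g^[n] x - x) := by
  induction n with
  | zero => simp
  | succ n ih =>
    have hsplit : g^[n + 1] x - x = (g (g^[n] x) - g x) + (g x - x) := by
      rw [Function.iterate_succ_apply']; abel
    rw [hsplit]
    refine w.map_le_add ?_ le_rfl
    calc w (g x - x) ≤ w (g^[n] x - x) := ih
      _ ≤ w (g^[n] x - x) + 1 := le_add_of_nonneg_right (by exact_mod_cast zero_le_one)
      _ ≤ _ := hg _ _

theorem IsSeqComplete.exists_fixedPoint (hw : w.IsSeqComplete) : ∃ u, g u = u := by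
  by_cases hfix : g 0 = 0
  · exact ⟨0, hfix⟩
  obtain ⟨d, hd⟩ := WithTop.ne_top_iff_exists.mp (w.ne_top_iff.mpr (sub_ne_zero.mpr hfix))
  have hcauchy : ∀ b k : ℕ, ((d + b : ℤ) : WithTop ℤ) ≤ w (g^[b + k] 0 - g^[b] 0) := by
    intro b k
    rw [Function.iterate_add_apply]
    calc ((d + b : ℤ) : WithTop ℤ) = w (g 0 - 0) + (b : ℤ) := by rw [← hd]; rfl
      _ ≤ w (g^[k] 0 - 0) + (b : ℤ) := by gcongr; exact map_iterate_sub_self_ge hg 0 k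
      _ ≤ _ := map_iterate_sub_ge hg b _ _
  obtain ⟨l, hl⟩ := hw (fun n => g^[n] 0) fun M => by
    refine ⟨(M - d).toNat, fun a ha b hb => ?_⟩
    have hle : ∀ a b, (M - d).toNat ≤ b → b ≤ a → (M : WithTop ℤ) ≤ w (g^[a] 0 - g^[b] 0) := by
      intro a b hb hba
      obtain ⟨k, rfl⟩ := Nat.exists_eq_add_of_le hba
      exact le_trans (by exact_mod_cast (by omega : M ≤ d + b)) (hcauchy b k)
    rcases le_total b a with hba | hab
    · exact hle a b hb hba
    · rw [map_sub_swap]; exact hle b a ha hab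
  refine ⟨l, w.eq_of_forall_coe_le_map_sub fun M => ?_⟩
  obtain ⟨N, hN⟩ := hl M
  have hsplit : g l - l = (g l - g (g^[N] 0)) + (g^[N + 1] 0 - l) := by
    rw [Function.iterate_succ_apply']; abel
  rw [hsplit]
  refine w.map_le_add ?_ (hN _ (by omega))
  calc (M : WithTop ℤ) ≤ w (l - g^[N] 0) := by rw [map_sub_swap]; exact hN N le_rfl
    _ ≤ w (l - g^[N] 0) + 1 := le_add_of_nonneg_right (by exact_mod_cast zero_le_one)
    _ ≤ _ := hg _ _

end Contraction

variable {τ : K ≃+* K} {t : K}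

theorem map_zpow_of_map_eq_one (ht : w t = 1) (m : ℤ) : w (t ^ m) = m := by
  cases m with
  | ofNat n => simp [ht]
  | negSucc n =>
    rw [zpow_negSucc, map_inv, map_pow, ht, nsmul_one, Int.negSucc_eq]
    norm_cast

theorem map_zpow_mul_apply (hτ : ∀ x, w (τ x) = w x) (ht : w t = 1) (m : ℤ) (x : K) :
    w (t ^ m * τ x) = m + w x := by
  rw [map_mul, map_zpow_of_map_eq_one ht, hτ]

theorem eq_zero_of_zpow_mul_apply_eq_self (hτ : ∀ x, w (τ x) = w x) (ht : w t = 1) {s : ℤ}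
    (hs : s ≠ 0) {u : K} (h : t ^ s * τ u = u) : u = 0 := by
  have hval := map_zpow_mul_apply hτ ht s u
  rw [h] at hval
  by_contra hu
  obtain ⟨k, hk⟩ := WithTop.ne_top_iff_exists.mp (w.ne_top_iff.mpr hu)
  rw [← hk] at hval
  norm_cast at hval
  omega

theorem add_one_le_map_sub_of_sub_eq_zpow_mul (hτ : ∀ x, w (τ x) = w x) (ht : w t = 1)
    {m : ℤ} (hm : 0 < m) {g : K → K} (hg : ∀ x y, g x - g y = t ^ m * τ (x - y)) (x y : K) :
    w (x - y) + 1 ≤ w (g x - g y) := by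
  rw [hg, map_zpow_mul_apply hτ ht, add_comm]
  gcongr
  exact_mod_cast hm

theorem IsSeqComplete.exists_zpow_mul_apply_sub_eq (hw : w.IsSeqComplete)
    (hτ : ∀ x, w (τ x) = w x) (ht : w t = 1) (hτt : τ t = t) {s : ℤ} (hs : s ≠ 0) (c : K) :
    ∃ u, t ^ s * τ u - u = c := by
  rcases hs.lt_or_gt with hneg | hpos
  · -- for `s < 0`, solve the equivalent `u = t ^ (-s) * τ⁻¹ (u + c)` instead
    have hτ' : ∀ x, w (τ.symm x) = w x := fun x => by rw [← hτ, τ.apply_symm_apply]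
    obtain ⟨u, hu⟩ := hw.exists_fixedPoint (g := fun u => t ^ (-s) * τ.symm (u + c))
      (add_one_le_map_sub_of_sub_eq_zpow_mul hτ' ht (m := -s) (by omega) fun x y => by
        simp only [← mul_sub, ← _root_.map_sub, add_sub_add_right_eq_sub])
    refine ⟨u, ?_⟩
    have hτu : τ u = t ^ (-s) * (u + c) := by
      conv_lhs => rw [← hu]
      rw [_root_.map_mul, map_zpow₀, hτt, τ.apply_symm_apply]
    rw [hτu, ← mul_assoc, ← zpow_add₀ (w.ne_top_iff.mp (by simp [ht])), add_neg_cancel, zpow_zero,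
      one_mul, add_sub_cancel_left]
  · obtain ⟨u, hu⟩ := hw.exists_fixedPoint (g := fun u => t ^ s * τ u - c)
      (add_one_le_map_sub_of_sub_eq_zpow_mul hτ ht hpos fun x y => by
        simp only [_root_.map_sub, mul_sub]; abel)
    exact ⟨u, sub_eq_iff_eq_add'.mpr (sub_eq_iff_eq_add.mp hu)⟩

theorem IsSeqComplete.bijective_twistedShift_sub_id (hw : w.IsSeqComplete)
    {σ : K ≃+* K} (hσ : ∀ x, w (σ x) = w x) (ht : w t = 1) (hσt : σ t = t) {s : ℤ}
    (hs : s ≠ 0) (r : ℕ) :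
    Function.Bijective (twistedShift σ (t ^ s) r - AddMonoidHom.id (Fin r → K)) := by
  have hσr : ∀ x, w ((σ ^ r) x) = w x := fun x => by
    rw [RingAut.coe_pow]; exact congrFun (Function.iterate_invariant (g := ⇑w) (funext hσ) r) x
  have hσrt : (σ ^ r) t = t := by rw [RingAut.coe_pow]; exact Function.iterate_fixed hσt r
  exact _root_.bijective_twistedShift_sub_id
    (fun _ => eq_zero_of_zpow_mul_apply_eq_self hσr ht hs)
    (hw.exists_zpow_mul_apply_sub_eq hσr ht hσrt hs)

end AddValuation

section Lattice

variable {ι K : Type*} [Ring K] (O : Subring K)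

theorem setOf_forall_mem_eq_coe_pi :
    {x : ι → K | ∀ i, x i ∈ O} =
      (AddSubgroup.pi Set.univ fun _ => O.toAddSubgroup : AddSubgroup (ι → K)) := by
  ext; simp [AddSubgroup.mem_pi]

theorem setOf_forall_mem_smul_eq_coe_smul_pi (a : K) :
    {x : ι → K | ∀ i, x i ∈ a • (O : Set K)} =
      (a • AddSubgroup.pi Set.univ fun _ => O.toAddSubgroup : AddSubgroup (ι → K)) := by
  rw [AddSubgroup.coe_pointwise_smul, AddSubgroup.coe_pi, Set.smul_set_univ_pi]; ext; simp

end Lattice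

theorem setOf_eq_mulVec_eq_coe_map {ι K : Type*} [CommRing K] [Fintype ι] (O : Subring K)
    (P : Matrix ι ι K) :
    {x | ∃ y : ι → K, (∀ i, y i ∈ O) ∧ x = P.mulVec y} =
      ((AddSubgroup.pi Set.univ fun _ => O.toAddSubgroup).map P.mulVecLin.toAddMonoidHom :
        AddSubgroup (ι → K)) := by
  ext; simp [AddSubgroup.mem_pi, eq_comm]

/-- Nonzero-slope lattice quotient statement. With
`Φ(x_1,…,x_r) = (t^s σ(x_r), σ(x_1), …, σ(x_{r−1}))`, `f = Φ − id`, `Λ₀ = 𝒪_L^r`, a lattice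
`Λ = P·Λ₀` and `e ∈ ℤ` with `f(t^eΛ₀) ⊆ Λ`: one has `t^eΛ₀ ⊆ f⁻¹(Λ)`,
`f(t^eΛ₀) = t^e·f(Λ₀)` is an additive subgroup of `Λ`, `f⁻¹(Λ)` is an additive subgroup of
`L^r`, and `f` induces a group isomorphism `f⁻¹(Λ)/t^eΛ₀ ≃ Λ/f(t^eΛ₀)`. -/
theorem stmt_19 {L : Type*} [Field L] (v : L → ℤ) (t : L)
    (hv_mul : ∀ x y : L, x ≠ 0 → y ≠ 0 → v (x * y) = v x + v y)
    (hv_add : ∀ x y : L, x ≠ 0 → y ≠ 0 → x + y ≠ 0 → min (v x) (v y) ≤ v (x + y))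
    (ht0 : t ≠ 0) (ht1 : v t = 1)
    (O : Subring L)
    -- completeness of `L` for the valuation topology (Cauchy sequences converge)
    (hcomp : ∀ x : ℕ → L,
      (∀ M : ℤ, ∃ N : ℕ, ∀ a ≥ N, ∀ b ≥ N, x a - x b = 0 ∨ M ≤ v (x a - x b)) →
      ∃ l : L, ∀ M : ℤ, ∃ N : ℕ, ∀ a ≥ N, x a - l = 0 ∨ M ≤ v (x a - l))
    (σ : L ≃+* L) (hσt : σ t = t) (hσv : ∀ x : L, x ≠ 0 → v (σ x) = v x)
    (r : ℕ) (hr : 1 ≤ r) (s : ℤ) (hs : s ≠ 0)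
    (Φ : (Fin r → L) → (Fin r → L))
    (hΦ : ∀ (x : Fin r → L) (i : Fin r), Φ x i =
      if (i : ℕ) = 0 then t ^ s * σ (x (⟨r - 1, by omega⟩ : Fin r))
      else σ (x (⟨(i : ℕ) - 1, by omega⟩ : Fin r)))
    (f : (Fin r → L) → (Fin r → L)) (hf : ∀ x, f x = Φ x - x)
    -- the lattice `Λ = P·Λ₀` for some `P ∈ GL_r(L)`
    (P : Matrix (Fin r) (Fin r) L)
    (Λ : Set (Fin r → L))
    (hΛ : Λ = {x | ∃ y : Fin r → L, (∀ i, y i ∈ O) ∧ x = P.mulVec y})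
    (e : ℤ)
    (he : ∀ x : Fin r → L, (∀ i, x i ∈ t ^ e • (O : Set L)) → f x ∈ Λ) :
    -- `t^eΛ₀ ⊆ f⁻¹(Λ)`
    ({x : Fin r → L | ∀ i, x i ∈ t ^ e • (O : Set L)} ⊆ f ⁻¹' Λ) ∧
    -- `f(t^eΛ₀) = t^e·f(Λ₀)`
    (f '' {x | ∀ i, x i ∈ t ^ e • (O : Set L)} =
      t ^ e • (f '' {x : Fin r → L | ∀ i, x i ∈ O})) ∧
    -- `f(t^eΛ₀)` is an additive subgroup of `Λ`
    (f '' {x | ∀ i, x i ∈ t ^ e • (O : Set L)} ⊆ Λ) ∧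
    ((0 : Fin r → L) ∈ f '' {x | ∀ i, x i ∈ t ^ e • (O : Set L)}) ∧
    (∀ a ∈ f '' {x | ∀ i, x i ∈ t ^ e • (O : Set L)},
      ∀ b ∈ f '' {x | ∀ i, x i ∈ t ^ e • (O : Set L)},
        a - b ∈ f '' {x | ∀ i, x i ∈ t ^ e • (O : Set L)}) ∧
    -- `f⁻¹(Λ)` is an additive subgroup of `L^r`
    ((0 : Fin r → L) ∈ f ⁻¹' Λ) ∧
    (∀ a ∈ f ⁻¹' Λ, ∀ b ∈ f ⁻¹' Λ, a - b ∈ f ⁻¹' Λ) ∧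
    -- `f` induces a bijection (an isomorphism of abelian groups)
    -- `f⁻¹(Λ)/t^eΛ₀ ≃ Λ/f(t^eΛ₀)`
    (∀ x₁ ∈ f ⁻¹' Λ, ∀ x₂ ∈ f ⁻¹' Λ,
      ((∀ i, (x₁ - x₂) i ∈ t ^ e • (O : Set L)) ↔
        f x₁ - f x₂ ∈ f '' {x | ∀ i, x i ∈ t ^ e • (O : Set L)})) ∧
    (∀ y ∈ Λ, ∃ x ∈ f ⁻¹' Λ, f x = y) := by
  have hw : (AddValuation.ofIntOnNonzero v hv_mul hv_add).IsSeqComplete :=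
    AddValuation.isSeqComplete_ofIntOnNonzero hcomp
  have hbij := hw.bijective_twistedShift_sub_id (AddValuation.ofIntOnNonzero_map hσv)
    (by rw [AddValuation.ofIntOnNonzero_apply ht0, ht1]; rfl) hσt hs r
  obtain rfl : f = ⇑(twistedShift σ (t ^ s) r - AddMonoidHom.id (Fin r → L)) := funext fun x => by
    rw [hf, show Φ = twistedShift σ (t ^ s) r from funext fun x => funext (hΦ x)]; rfl
  set F := twistedShift σ (t ^ s) r - AddMonoidHom.id (Fin r → L)
  have hFsmul : ∀ x, F (t ^ e • x) = t ^ e • F x := fun x => by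
    have hσte : σ (t ^ e) = t ^ e := by rw [map_zpow₀, hσt]
    simp only [F, AddMonoidHom.sub_apply, AddMonoidHom.id_apply, smul_sub,
      twistedShift_smul hσte (Commute.all _ _)]
  have hA := setOf_forall_mem_smul_eq_coe_smul_pi (ι := Fin r) O (t ^ e)
  rw [setOf_eq_mulVec_eq_coe_map] at hΛ
  refine ⟨fun x hx => he x hx, ?_, Set.image_subset_iff.mpr he, ?_, ?_, ?_, ?_, ?_, ?_⟩
  · rw [hA, setOf_forall_mem_eq_coe_pi, AddSubgroup.coe_pointwise_smul]
    exact Set.image_smul_comm _ _ _ hFsmul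
  · rw [hA, ← AddSubgroup.coe_map]; exact zero_mem _
  · rw [hA, ← AddSubgroup.coe_map]; exact fun a ha b hb => sub_mem ha hb
  · rw [hΛ, ← AddSubgroup.coe_comap]; exact zero_mem _
  · rw [hΛ, ← AddSubgroup.coe_comap]; exact fun a ha b hb => sub_mem ha hb
  · intro x₁ _ x₂ _
    rw [← map_sub, hbij.1.mem_set_image]; rfl
  · intro y hy
    obtain ⟨x, rfl⟩ := hbij.2 y
    exact ⟨x, hy, rfl⟩
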